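/- arXiv:2003.04674 — 2 statements merged into one kernel-verified Lean document; each statement's English description precedes it below -/
import Mathlib

section
/- Let M, B be Riemannian manifolds, φ : M → B a Riemannian submersion, N a closed submanifold of B, p ∈ φ⁻¹(N), X ∈ T_p^⊥ φ⁻¹(N). Suppose ν_M is an isometry of M fixing p, ν_B is an isometry of B fixing φ(p), and φ ∘ ν_M = ν_B ∘ φ. Then ν_M(φ⁻¹(N)) = φ⁻¹(N) and dν_M(X) = -X hold if and only if ν_B(N) = N and dν_B(dφ(X)) = -dφ(X) hold. -/
open RealInnerProductSpace

/-- Lemma 1 of the paper, with the Riemannian submersion `φ : M → B` encoded by the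
underlying surjective map `φ` together with its differential `dφ` at `p` (isometric on the
horizontal space `(ker dφ)ᗮ`), the isometries `νM`, `νB` by the underlying bijections
together with their (orthogonal) differentials `dνM`, `dνB` at the fixed points `p`, `φ(p)`,
`W = T_p φ⁻¹(N)` (containing the vertical space `ker dφ` and invariant data), and a normal
vector `X ∈ Wᗮ`. Then `νM(φ⁻¹(N)) = φ⁻¹(N)` and `dνM(X) = -X` hold iff `νB(N) = N`
and `dνB(dφ(X)) = -dφ(X)` hold. -/
theorem stmt_15 {M B T T' : Type*} [NormedAddCommGroup T] [InnerProductSpace ℝ T]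
    [NormedAddCommGroup T'] [InnerProductSpace ℝ T']
    (φ : M → B) (hφsurj : Function.Surjective φ) (N : Set B)
    (p : M) (hp : p ∈ φ ⁻¹' N)
    (νM : M ≃ M) (νB : B ≃ B) (hfixM : νM p = p) (hfixB : νB (φ p) = φ p)
    (hcomm : ∀ x, φ (νM x) = νB (φ x))
    (dφ : T →ₗ[ℝ] T') (hdφsurj : Function.Surjective dφ)
    (hiso : ∀ x y : T, x ∈ (LinearMap.ker dφ)ᗮ → y ∈ (LinearMap.ker dφ)ᗮ →
      ⟪dφ x, dφ y⟫ = ⟪x, y⟫)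
    (dνM : T ≃ₗᵢ[ℝ] T) (dνB : T' ≃ₗᵢ[ℝ] T')
    (hchain : ∀ v : T, dφ (dνM v) = dνB (dφ v))
    (W : Submodule ℝ T) (hker : LinearMap.ker dφ ≤ W)
    (hkerinv : ∀ v ∈ LinearMap.ker dφ, dνM v ∈ LinearMap.ker dφ ∧
      dνM.symm v ∈ LinearMap.ker dφ)
    (X : T) (hX : X ∈ Wᗮ) :
    (⇑νM '' (φ ⁻¹' N) = φ ⁻¹' N ∧ dνM X = -X) ↔
      (⇑νB '' N = N ∧ dνB (dφ X) = -(dφ X)) := by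
  -- Set part: νM '' (φ⁻¹ N) = φ⁻¹ (νB '' N)
  have hsymm : ∀ x, φ (νM.symm x) = νB.symm (φ x) := by
    intro x
    have h := hcomm (νM.symm x)
    rw [νM.apply_symm_apply] at h
    rw [h, νB.symm_apply_apply]
  have himg : ⇑νM '' (φ ⁻¹' N) = φ ⁻¹' (⇑νB '' N) := by
    ext x
    simp only [Set.mem_image, Set.mem_preimage]
    constructor
    · rintro ⟨y, hy, rfl⟩
      exact ⟨φ y, hy, (hcomm y).symm⟩
    · rintro ⟨b, hb, hx⟩
      refine ⟨νM.symm x, ?_, νM.apply_symm_apply x⟩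
      show φ (νM.symm x) ∈ N
      rw [hsymm, ← hx, νB.symm_apply_apply]
      exact hb
  have hset : (⇑νM '' (φ ⁻¹' N) = φ ⁻¹' N) ↔ (⇑νB '' N = N) := by
    rw [himg, Set.preimage_eq_preimage hφsurj]
  -- Vector part
  have hXk : X ∈ (LinearMap.ker dφ)ᗮ := fun v hv => hX v (hker hv)
  have hvec : dνM X = -X ↔ dνB (dφ X) = -(dφ X) := by
    constructor
    · intro h
      rw [← hchain, h, map_neg]
    · intro h
      have hdM : (dνM X : T) ∈ (LinearMap.ker dφ)ᗮ := by
        intro v hv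
        have hv' : dνM.symm v ∈ LinearMap.ker dφ := (hkerinv v hv).2
        calc ⟪v, dνM X⟫ = ⟪dνM (dνM.symm v), dνM X⟫ := by rw [dνM.apply_symm_apply]
          _ = ⟪dνM.symm v, X⟫ := dνM.inner_map_map _ _
          _ = 0 := hX _ (hker hv')
      have hsum_ker : dνM X + X ∈ LinearMap.ker dφ := by
        rw [LinearMap.mem_ker, map_add, hchain, h, neg_add_cancel]
      have hsum_orth : dνM X + X ∈ (LinearMap.ker dφ)ᗮ :=
        Submodule.add_mem _ hdM hXk
      have : dνM X + X = 0 := by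
        have h0 : ⟪(dνM X + X : T), dνM X + X⟫ = 0 := hsum_orth _ hsum_ker
        exact inner_self_eq_zero.mp h0
      exact eq_neg_of_add_eq_zero_left this
  rw [hset, hvec]
end

section
/- Let M be a Riemannian manifold and N a weakly reflective submanifold: for each normal vector ξ at each p ∈ N there is an isometry ν_ξ of M with ν_ξ(p) = p, dν_ξ(ξ) = -ξ and ν_ξ(N) = N. Then for every such ξ, the shape operator satisfies A_{-ξ} = P ∘ A_ξ ∘ P⁻¹ for the orthogonal map P = dν_ξ|_{T_pN}, hence A_ξ and -A_ξ have the same eigenvalues with multiplicities; i.e., N is austere. -/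
/-- Weakly reflective implies austere, at the level of shape operators: `A : W → (V →ₗ V)`
assigns to each normal vector `ξ ∈ W = T_p^⊥N` its (self-adjoint) shape operator on
`V = T_pN`, linear in `ξ`; a reflection `ν_ξ` with differential acting by `Q` on normal
vectors (`Q ξ = -ξ`) and by the orthogonal map `P` on `V` conjugates shape operators:
`A(Q η) = P ∘ A(η) ∘ P⁻¹`. Then `A(-ξ) = P ∘ A(ξ) ∘ P⁻¹`, hence `A(ξ)` and `-A(ξ)`
have the same eigenvalues with multiplicities. -/
theorem stmt_18 {V W : Type*} [NormedAddCommGroup V] [InnerProductSpace ℝ V]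
    [FiniteDimensional ℝ V] [AddCommGroup W]
    (A : W → (V →ₗ[ℝ] V)) (hsym : ∀ η, (A η).IsSymmetric)
    (hlin : ∀ η : W, A (-η) = -(A η))
    (ξ : W) (P : V ≃ₗᵢ[ℝ] V) (Q : W → W) (hQ : Q ξ = -ξ)
    (hrule : ∀ (η : W) (v : V), A (Q η) v = P (A η (P.symm v))) :
    (∀ v : V, A (-ξ) v = P (A ξ (P.symm v))) ∧
      ∀ μ : ℝ, Module.finrank ℝ (Module.End.eigenspace (A ξ) μ) =
        Module.finrank ℝ (Module.End.eigenspace (A ξ) (-μ)) := by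
  have key : ∀ v : V, A (-ξ) v = P (A ξ (P.symm v)) := by
    intro v; rw [← hQ]; exact hrule ξ v
  refine ⟨key, fun μ => ?_⟩
  -- conjugation identity: A ξ (P v) = - P (A ξ v)
  have conj : ∀ v : V, A ξ (P v) = - P (A ξ v) := by
    intro v
    have h := key (P v)
    rw [hlin] at h
    simp only [LinearMap.neg_apply, P.symm_apply_apply] at h
    exact neg_eq_iff_eq_neg.mp h
  have hmap : Submodule.map (P.toLinearEquiv : V →ₗ[ℝ] V)
      (Module.End.eigenspace (A ξ) μ) = Module.End.eigenspace (A ξ) (-μ) := by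
    ext w
    simp only [Submodule.mem_map, Module.End.mem_eigenspace_iff]
    constructor
    · rintro ⟨v, hv, rfl⟩
      show A ξ (P v) = (-μ) • P v
      rw [conj v, hv]
      simp
    · intro hw
      refine ⟨P.symm w, ?_, by simp⟩
      have hw' : A ξ (P (P.symm w)) = (-μ) • (P (P.symm w)) := by
        simpa using hw
      rw [conj (P.symm w)] at hw'
      have : P (A ξ (P.symm w)) = μ • P (P.symm w) := by
        have := congrArg Neg.neg hw'
        simpa [neg_smul] using this
      have := congrArg P.symm this
      simpa [map_smul] using this
  rw [← hmap, LinearEquiv.finrank_map_eq]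
end
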